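/- arXiv:0806.4790 — 2 statements merged into one kernel-verified Lean document; each statement's English description precedes it below -/
import Mathlib

section
/- For any vector v ∈ ℝ^{[n]²}, Σ_{(i, j, k, l) ∈ D} |v_i v_j v_k v_l| ≤ 9 · (Σ_{p ∈ [n]²} v_p²)². -/
/-- The defining condition of the set `𝒟` of 4-tuples `(i,j,k,l)` of index
vectors in `[n]²`: for each coordinate `s ∈ {1,2}`,
`((i_s = j_s) ∧ (k_s = l_s)) ∨ ((i_s = k_s) ∧ (j_s = l_s)) ∨ ((i_s = l_s) ∧ (k_s = j_s))`. -/
def DCond {n : ℕ} (i j k l : Fin n × Fin n) : Prop :=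
  ((i.1 = j.1 ∧ k.1 = l.1) ∨ (i.1 = k.1 ∧ j.1 = l.1) ∨ (i.1 = l.1 ∧ k.1 = j.1)) ∧
  ((i.2 = j.2 ∧ k.2 = l.2) ∨ (i.2 = k.2 ∧ j.2 = l.2) ∨ (i.2 = l.2 ∧ k.2 = j.2))

instance {n : ℕ} (i j k l : Fin n × Fin n) : Decidable (DCond i j k l) := by
  unfold DCond; infer_instance

open Finset

private lemma sum_filter_or_le {α : Type*} [Fintype α] [DecidableEq α]
    (p q : α → Prop) [DecidablePred p] [DecidablePred q]
    (f : α → ℝ) (hf : ∀ x, 0 ≤ f x) :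
    ∑ x ∈ Finset.univ.filter (fun x => p x ∨ q x), f x
      ≤ ∑ x ∈ Finset.univ.filter p, f x + ∑ x ∈ Finset.univ.filter q, f x := by
  rw [Finset.filter_or]
  have h1 : (∑ x ∈ Finset.univ.filter p ∪ Finset.univ.filter q, f x)
      + ∑ x ∈ Finset.univ.filter p ∩ Finset.univ.filter q, f x
      = (∑ x ∈ Finset.univ.filter p, f x) + ∑ x ∈ Finset.univ.filter q, f x :=
    Finset.sum_union_inter
  have h0 : 0 ≤ ∑ x ∈ Finset.univ.filter p ∩ Finset.univ.filter q, f x :=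
    Finset.sum_nonneg fun x _ => hf x
  linarith

/-- Cauchy–Schwarz style bound for the "mixed" cases. -/
private lemma mix_bound (n : ℕ) (v : Fin n × Fin n → ℝ) :
    ∑ x : Fin n × Fin n, ∑ y : Fin n × Fin n,
      |v (x.1, x.2)| * |v (x.1, y.2)| * |v (y.1, x.2)| * |v (y.1, y.2)|
      ≤ (∑ p : Fin n × Fin n, v p ^ 2) ^ 2 := by
  set M : Fin n → Fin n → ℝ := fun a b => |v (a, b)| with hM
  have hMnn : ∀ a b, 0 ≤ M a b := fun a b => abs_nonneg _
  have key : ∀ a c : Fin n,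
      ∑ b : Fin n, ∑ d : Fin n, M a b * M a d * M c b * M c d
        = (∑ b : Fin n, M a b * M c b) ^ 2 := by
    intro a c
    rw [sq, Finset.sum_mul_sum]
    apply Finset.sum_congr rfl; intro b _
    apply Finset.sum_congr rfl; intro d _
    ring
  calc ∑ x : Fin n × Fin n, ∑ y : Fin n × Fin n,
        |v (x.1, x.2)| * |v (x.1, y.2)| * |v (y.1, x.2)| * |v (y.1, y.2)|
      = ∑ a : Fin n, ∑ b : Fin n, ∑ c : Fin n, ∑ d : Fin n,
          M a b * M a d * M c b * M c d := by
        simp only [Fintype.sum_prod_type, hM]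
    _ = ∑ a : Fin n, ∑ c : Fin n, ∑ b : Fin n, ∑ d : Fin n,
          M a b * M a d * M c b * M c d := by
        apply Finset.sum_congr rfl; intro a _
        exact Finset.sum_comm
    _ = ∑ a : Fin n, ∑ c : Fin n, (∑ b : Fin n, M a b * M c b) ^ 2 := by
        apply Finset.sum_congr rfl; intro a _
        apply Finset.sum_congr rfl; intro c _
        exact key a c
    _ ≤ ∑ a : Fin n, ∑ c : Fin n,
          (∑ b : Fin n, M a b ^ 2) * (∑ b : Fin n, M c b ^ 2) := by
        apply Finset.sum_le_sum; intro a _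
        apply Finset.sum_le_sum; intro c _
        exact Finset.sum_mul_sq_le_sq_mul_sq _ _ _
    _ = (∑ a : Fin n, ∑ b : Fin n, M a b ^ 2) ^ 2 := by
        rw [sq, Finset.sum_mul_sum]
    _ = (∑ p : Fin n × Fin n, v p ^ 2) ^ 2 := by
        rw [Fintype.sum_prod_type]
        congr 1
        apply Finset.sum_congr rfl; intro a _
        apply Finset.sum_congr rfl; intro b _
        simp [hM, sq_abs]

private lemma same_bound (n : ℕ) (v : Fin n × Fin n → ℝ) :
    ∑ x : Fin n × Fin n, ∑ y : Fin n × Fin n, v x ^ 2 * v y ^ 2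
      = (∑ p : Fin n × Fin n, v p ^ 2) ^ 2 := by
  rw [sq, Finset.sum_mul_sum]

private lemma case_sum {n : ℕ}
    (c : (Fin n × Fin n) × (Fin n × Fin n) × (Fin n × Fin n) × (Fin n × Fin n) → Prop)
    [DecidablePred c]
    (φ : (Fin n × Fin n) × (Fin n × Fin n) →
      (Fin n × Fin n) × (Fin n × Fin n) × (Fin n × Fin n) × (Fin n × Fin n))
    (ψ : (Fin n × Fin n) × (Fin n × Fin n) × (Fin n × Fin n) × (Fin n × Fin n) →
      (Fin n × Fin n) × (Fin n × Fin n))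
    (h1 : ∀ x, c x → φ (ψ x) = x) (h2 : ∀ y, ψ (φ y) = y) (h3 : ∀ y, c (φ y))
    (F : (Fin n × Fin n) × (Fin n × Fin n) × (Fin n × Fin n) × (Fin n × Fin n) → ℝ) :
    ∑ x ∈ Finset.univ.filter c, F x = ∑ y : (Fin n × Fin n) × (Fin n × Fin n), F (φ y) := by
  apply Finset.sum_nbij' ψ φ
  · intro a _; exact Finset.mem_univ _
  · intro b _; exact Finset.mem_filter.2 ⟨Finset.mem_univ _, h3 b⟩
  · intro a ha; exact h1 a (Finset.mem_filter.1 ha).2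
  · intro b _; exact h2 b
  · intro a ha; rw [h1 a (Finset.mem_filter.1 ha).2]

set_option maxHeartbeats 1600000 in
/-- For any `v ∈ ℝ^{[n]²}`,
`∑_{(i,j,k,l) ∈ 𝒟} |v_i v_j v_k v_l| ≤ 9 (∑_{p ∈ [n]²} v_p²)²`. -/
theorem sum_over_D_le
    (n : ℕ) (hn : 1 ≤ n) (v : Fin n × Fin n → ℝ) :
    ∑ x ∈ Finset.univ.filter
        (fun x : (Fin n × Fin n) × (Fin n × Fin n) × (Fin n × Fin n) × (Fin n × Fin n) =>
          DCond x.1 x.2.1 x.2.2.1 x.2.2.2),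
      |v x.1 * v x.2.1 * v x.2.2.1 * v x.2.2.2|
      ≤ 9 * (∑ p : Fin n × Fin n, (v p) ^ 2) ^ 2 := by
  classical
  set F : (Fin n × Fin n) × (Fin n × Fin n) × (Fin n × Fin n) × (Fin n × Fin n) → ℝ :=
    fun x => |v x.1 * v x.2.1 * v x.2.2.1 * v x.2.2.2| with hF
  have hFnn : ∀ x, 0 ≤ F x := fun x => abs_nonneg _
  set C1 := fun x : (Fin n × Fin n) × (Fin n × Fin n) × (Fin n × Fin n) × (Fin n × Fin n) =>
    (x.1.1 = x.2.1.1 ∧ x.2.2.1.1 = x.2.2.2.1) ∧ (x.1.2 = x.2.1.2 ∧ x.2.2.1.2 = x.2.2.2.2) with hC1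
  set C2 := fun x : (Fin n × Fin n) × (Fin n × Fin n) × (Fin n × Fin n) × (Fin n × Fin n) =>
    (x.1.1 = x.2.1.1 ∧ x.2.2.1.1 = x.2.2.2.1) ∧ (x.1.2 = x.2.2.1.2 ∧ x.2.1.2 = x.2.2.2.2) with hC2
  set C3 := fun x : (Fin n × Fin n) × (Fin n × Fin n) × (Fin n × Fin n) × (Fin n × Fin n) =>
    (x.1.1 = x.2.1.1 ∧ x.2.2.1.1 = x.2.2.2.1) ∧ (x.1.2 = x.2.2.2.2 ∧ x.2.2.1.2 = x.2.1.2) with hC3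
  set C4 := fun x : (Fin n × Fin n) × (Fin n × Fin n) × (Fin n × Fin n) × (Fin n × Fin n) =>
    (x.1.1 = x.2.2.1.1 ∧ x.2.1.1 = x.2.2.2.1) ∧ (x.1.2 = x.2.1.2 ∧ x.2.2.1.2 = x.2.2.2.2) with hC4
  set C5 := fun x : (Fin n × Fin n) × (Fin n × Fin n) × (Fin n × Fin n) × (Fin n × Fin n) =>
    (x.1.1 = x.2.2.1.1 ∧ x.2.1.1 = x.2.2.2.1) ∧ (x.1.2 = x.2.2.1.2 ∧ x.2.1.2 = x.2.2.2.2) with hC5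
  set C6 := fun x : (Fin n × Fin n) × (Fin n × Fin n) × (Fin n × Fin n) × (Fin n × Fin n) =>
    (x.1.1 = x.2.2.1.1 ∧ x.2.1.1 = x.2.2.2.1) ∧ (x.1.2 = x.2.2.2.2 ∧ x.2.2.1.2 = x.2.1.2) with hC6
  set C7 := fun x : (Fin n × Fin n) × (Fin n × Fin n) × (Fin n × Fin n) × (Fin n × Fin n) =>
    (x.1.1 = x.2.2.2.1 ∧ x.2.2.1.1 = x.2.1.1) ∧ (x.1.2 = x.2.1.2 ∧ x.2.2.1.2 = x.2.2.2.2) with hC7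
  set C8 := fun x : (Fin n × Fin n) × (Fin n × Fin n) × (Fin n × Fin n) × (Fin n × Fin n) =>
    (x.1.1 = x.2.2.2.1 ∧ x.2.2.1.1 = x.2.1.1) ∧ (x.1.2 = x.2.2.1.2 ∧ x.2.1.2 = x.2.2.2.2) with hC8
  set C9 := fun x : (Fin n × Fin n) × (Fin n × Fin n) × (Fin n × Fin n) × (Fin n × Fin n) =>
    (x.1.1 = x.2.2.2.1 ∧ x.2.2.1.1 = x.2.1.1) ∧ (x.1.2 = x.2.2.2.2 ∧ x.2.2.1.2 = x.2.1.2) with hC9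
  -- split the defining condition into nine cases
  have hsplit : ∀ x ∈ (Finset.univ :
      Finset ((Fin n × Fin n) × (Fin n × Fin n) × (Fin n × Fin n) × (Fin n × Fin n))),
      DCond x.1 x.2.1 x.2.2.1 x.2.2.2 ↔
        (C1 x ∨ C2 x ∨ C3 x ∨ C4 x ∨ C5 x ∨ C6 x ∨ C7 x ∨ C8 x ∨ C9 x) := by
    intro x _
    simp only [hC1, hC2, hC3, hC4, hC5, hC6, hC7, hC8, hC9, DCond]
    constructor
    · rintro ⟨(h | h | h), (g | g | g)⟩ <;>
        first
          | exact Or.inl ⟨h, g⟩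
          | exact Or.inr (Or.inl ⟨h, g⟩)
          | exact Or.inr (Or.inr (Or.inl ⟨h, g⟩))
          | exact Or.inr (Or.inr (Or.inr (Or.inl ⟨h, g⟩)))
          | exact Or.inr (Or.inr (Or.inr (Or.inr (Or.inl ⟨h, g⟩))))
          | exact Or.inr (Or.inr (Or.inr (Or.inr (Or.inr (Or.inl ⟨h, g⟩)))))
          | exact Or.inr (Or.inr (Or.inr (Or.inr (Or.inr (Or.inr (Or.inl ⟨h, g⟩))))))
          | exact Or.inr (Or.inr (Or.inr (Or.inr (Or.inr (Or.inr (Or.inr (Or.inl ⟨h, g⟩)))))))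
          | exact Or.inr (Or.inr (Or.inr (Or.inr (Or.inr (Or.inr (Or.inr (Or.inr ⟨h, g⟩)))))))
    · rintro (⟨a, b⟩ | ⟨a, b⟩ | ⟨a, b⟩ | ⟨a, b⟩ | ⟨a, b⟩ | ⟨a, b⟩ | ⟨a, b⟩ | ⟨a, b⟩ | ⟨a, b⟩) <;>
        first
          | exact ⟨Or.inl a, Or.inl b⟩
          | exact ⟨Or.inl a, Or.inr (Or.inl b)⟩
          | exact ⟨Or.inl a, Or.inr (Or.inr b)⟩
          | exact ⟨Or.inr (Or.inl a), Or.inl b⟩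
          | exact ⟨Or.inr (Or.inl a), Or.inr (Or.inl b)⟩
          | exact ⟨Or.inr (Or.inl a), Or.inr (Or.inr b)⟩
          | exact ⟨Or.inr (Or.inr a), Or.inl b⟩
          | exact ⟨Or.inr (Or.inr a), Or.inr (Or.inl b)⟩
          | exact ⟨Or.inr (Or.inr a), Or.inr (Or.inr b)⟩
  have b1 : ∑ x ∈ Finset.univ.filter C1, F x ≤ (∑ p : Fin n × Fin n, (v p) ^ 2) ^ 2 := by
    rw [case_sum C1 (fun y => (y.1, y.1, y.2, y.2)) (fun t => (t.1, t.2.2.1)) ?h1 ?h2 ?h3 F]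
    case h1 =>
      rintro ⟨i, j, k, l⟩ ⟨⟨a1, a2⟩, e1, e2⟩
      simp_all [Prod.ext_iff]
    case h2 => intro y; rfl
    case h3 => intro y; exact ⟨⟨rfl, rfl⟩, rfl, rfl⟩
    refine le_of_eq ?_
    rw [Fintype.sum_prod_type, sq, Finset.sum_mul_sum]
    apply Finset.sum_congr rfl; intro x _
    apply Finset.sum_congr rfl; intro y _
    simp only [hF]
    rw [show v x * v x * v y * v y = (v x * v y) ^ 2 from by ring, abs_sq, mul_pow]
  have b2 : ∑ x ∈ Finset.univ.filter C2, F x ≤ (∑ p : Fin n × Fin n, (v p) ^ 2) ^ 2 := by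
    rw [case_sum C2 (fun y => (y.1, (y.1.1, y.2.2), (y.2.1, y.1.2), y.2)) (fun t => (t.1, t.2.2.2)) ?h1 ?h2 ?h3 F]
    case h1 =>
      rintro ⟨i, j, k, l⟩ ⟨⟨a1, a2⟩, e1, e2⟩
      simp_all [Prod.ext_iff]
    case h2 => intro y; rfl
    case h3 => intro y; exact ⟨⟨rfl, rfl⟩, rfl, rfl⟩
    refine le_trans (le_of_eq ?_) (mix_bound n v)
    rw [Fintype.sum_prod_type]
    apply Finset.sum_congr rfl; intro x _
    apply Finset.sum_congr rfl; intro y _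
    simp only [hF, abs_mul]
    try ring
  have b3 : ∑ x ∈ Finset.univ.filter C3, F x ≤ (∑ p : Fin n × Fin n, (v p) ^ 2) ^ 2 := by
    rw [case_sum C3 (fun y => (y.1, (y.1.1, y.2.2), y.2, (y.2.1, y.1.2))) (fun t => (t.1, t.2.2.1)) ?h1 ?h2 ?h3 F]
    case h1 =>
      rintro ⟨i, j, k, l⟩ ⟨⟨a1, a2⟩, e1, e2⟩
      simp_all [Prod.ext_iff]
    case h2 => intro y; rfl
    case h3 => intro y; exact ⟨⟨rfl, rfl⟩, rfl, rfl⟩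
    refine le_trans (le_of_eq ?_) (mix_bound n v)
    rw [Fintype.sum_prod_type]
    apply Finset.sum_congr rfl; intro x _
    apply Finset.sum_congr rfl; intro y _
    simp only [hF, abs_mul]
    try ring
  have b4 : ∑ x ∈ Finset.univ.filter C4, F x ≤ (∑ p : Fin n × Fin n, (v p) ^ 2) ^ 2 := by
    rw [case_sum C4 (fun y => (y.1, (y.2.1, y.1.2), (y.1.1, y.2.2), y.2)) (fun t => (t.1, t.2.2.2)) ?h1 ?h2 ?h3 F]
    case h1 =>
      rintro ⟨i, j, k, l⟩ ⟨⟨a1, a2⟩, e1, e2⟩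
      simp_all [Prod.ext_iff]
    case h2 => intro y; rfl
    case h3 => intro y; exact ⟨⟨rfl, rfl⟩, rfl, rfl⟩
    refine le_trans (le_of_eq ?_) (mix_bound n v)
    rw [Fintype.sum_prod_type]
    apply Finset.sum_congr rfl; intro x _
    apply Finset.sum_congr rfl; intro y _
    simp only [hF, abs_mul]
    try ring
  have b5 : ∑ x ∈ Finset.univ.filter C5, F x ≤ (∑ p : Fin n × Fin n, (v p) ^ 2) ^ 2 := by
    rw [case_sum C5 (fun y => (y.1, y.2, y.1, y.2)) (fun t => (t.1, t.2.1)) ?h1 ?h2 ?h3 F]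
    case h1 =>
      rintro ⟨i, j, k, l⟩ ⟨⟨a1, a2⟩, e1, e2⟩
      simp_all [Prod.ext_iff]
    case h2 => intro y; rfl
    case h3 => intro y; exact ⟨⟨rfl, rfl⟩, rfl, rfl⟩
    refine le_of_eq ?_
    rw [Fintype.sum_prod_type, sq, Finset.sum_mul_sum]
    apply Finset.sum_congr rfl; intro x _
    apply Finset.sum_congr rfl; intro y _
    simp only [hF]
    rw [show v x * v y * v x * v y = (v x * v y) ^ 2 from by ring, abs_sq, mul_pow]
  have b6 : ∑ x ∈ Finset.univ.filter C6, F x ≤ (∑ p : Fin n × Fin n, (v p) ^ 2) ^ 2 := by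
    rw [case_sum C6 (fun y => (y.1, y.2, (y.1.1, y.2.2), (y.2.1, y.1.2))) (fun t => (t.1, t.2.1)) ?h1 ?h2 ?h3 F]
    case h1 =>
      rintro ⟨i, j, k, l⟩ ⟨⟨a1, a2⟩, e1, e2⟩
      simp_all [Prod.ext_iff]
    case h2 => intro y; rfl
    case h3 => intro y; exact ⟨⟨rfl, rfl⟩, rfl, rfl⟩
    refine le_trans (le_of_eq ?_) (mix_bound n v)
    rw [Fintype.sum_prod_type]
    apply Finset.sum_congr rfl; intro x _
    apply Finset.sum_congr rfl; intro y _
    simp only [hF, abs_mul]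
    try ring
  have b7 : ∑ x ∈ Finset.univ.filter C7, F x ≤ (∑ p : Fin n × Fin n, (v p) ^ 2) ^ 2 := by
    rw [case_sum C7 (fun y => (y.1, (y.2.1, y.1.2), y.2, (y.1.1, y.2.2))) (fun t => (t.1, t.2.2.1)) ?h1 ?h2 ?h3 F]
    case h1 =>
      rintro ⟨i, j, k, l⟩ ⟨⟨a1, a2⟩, e1, e2⟩
      simp_all [Prod.ext_iff]
    case h2 => intro y; rfl
    case h3 => intro y; exact ⟨⟨rfl, rfl⟩, rfl, rfl⟩
    refine le_trans (le_of_eq ?_) (mix_bound n v)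
    rw [Fintype.sum_prod_type]
    apply Finset.sum_congr rfl; intro x _
    apply Finset.sum_congr rfl; intro y _
    simp only [hF, abs_mul]
    try ring
  have b8 : ∑ x ∈ Finset.univ.filter C8, F x ≤ (∑ p : Fin n × Fin n, (v p) ^ 2) ^ 2 := by
    rw [case_sum C8 (fun y => (y.1, y.2, (y.2.1, y.1.2), (y.1.1, y.2.2))) (fun t => (t.1, t.2.1)) ?h1 ?h2 ?h3 F]
    case h1 =>
      rintro ⟨i, j, k, l⟩ ⟨⟨a1, a2⟩, e1, e2⟩
      simp_all [Prod.ext_iff]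
    case h2 => intro y; rfl
    case h3 => intro y; exact ⟨⟨rfl, rfl⟩, rfl, rfl⟩
    refine le_trans (le_of_eq ?_) (mix_bound n v)
    rw [Fintype.sum_prod_type]
    apply Finset.sum_congr rfl; intro x _
    apply Finset.sum_congr rfl; intro y _
    simp only [hF, abs_mul]
    try ring
  have b9 : ∑ x ∈ Finset.univ.filter C9, F x ≤ (∑ p : Fin n × Fin n, (v p) ^ 2) ^ 2 := by
    rw [case_sum C9 (fun y => (y.1, y.2, y.2, y.1)) (fun t => (t.1, t.2.1)) ?h1 ?h2 ?h3 F]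
    case h1 =>
      rintro ⟨i, j, k, l⟩ ⟨⟨a1, a2⟩, e1, e2⟩
      simp_all [Prod.ext_iff]
    case h2 => intro y; rfl
    case h3 => intro y; exact ⟨⟨rfl, rfl⟩, rfl, rfl⟩
    refine le_of_eq ?_
    rw [Fintype.sum_prod_type, sq, Finset.sum_mul_sum]
    apply Finset.sum_congr rfl; intro x _
    apply Finset.sum_congr rfl; intro y _
    simp only [hF]
    rw [show v x * v y * v y * v x = (v x * v y) ^ 2 from by ring, abs_sq, mul_pow]
  have t89 : ∑ x ∈ Finset.univ.filter (fun x => C8 x ∨ C9 x), F x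
      ≤ (∑ x ∈ Finset.univ.filter C8, F x) + ∑ x ∈ Finset.univ.filter C9, F x :=
    sum_filter_or_le _ _ _ hFnn
  have t7 : ∑ x ∈ Finset.univ.filter (fun x => C7 x ∨ C8 x ∨ C9 x), F x
      ≤ (∑ x ∈ Finset.univ.filter C7, F x) + (∑ x ∈ Finset.univ.filter C8, F x) + (∑ x ∈ Finset.univ.filter C9, F x) :=
    le_trans (sum_filter_or_le _ _ _ hFnn) (by linarith)
  have t6 : ∑ x ∈ Finset.univ.filter (fun x => C6 x ∨ C7 x ∨ C8 x ∨ C9 x), F x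
      ≤ (∑ x ∈ Finset.univ.filter C6, F x) + (∑ x ∈ Finset.univ.filter C7, F x) + (∑ x ∈ Finset.univ.filter C8, F x) + (∑ x ∈ Finset.univ.filter C9, F x) :=
    le_trans (sum_filter_or_le _ _ _ hFnn) (by linarith)
  have t5 : ∑ x ∈ Finset.univ.filter (fun x => C5 x ∨ C6 x ∨ C7 x ∨ C8 x ∨ C9 x), F x
      ≤ (∑ x ∈ Finset.univ.filter C5, F x) + (∑ x ∈ Finset.univ.filter C6, F x) + (∑ x ∈ Finset.univ.filter C7, F x) + (∑ x ∈ Finset.univ.filter C8, F x) + (∑ x ∈ Finset.univ.filter C9, F x) :=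
    le_trans (sum_filter_or_le _ _ _ hFnn) (by linarith)
  have t4 : ∑ x ∈ Finset.univ.filter (fun x => C4 x ∨ C5 x ∨ C6 x ∨ C7 x ∨ C8 x ∨ C9 x), F x
      ≤ (∑ x ∈ Finset.univ.filter C4, F x) + (∑ x ∈ Finset.univ.filter C5, F x) + (∑ x ∈ Finset.univ.filter C6, F x) + (∑ x ∈ Finset.univ.filter C7, F x) + (∑ x ∈ Finset.univ.filter C8, F x) + (∑ x ∈ Finset.univ.filter C9, F x) :=
    le_trans (sum_filter_or_le _ _ _ hFnn) (by linarith)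
  have t3 : ∑ x ∈ Finset.univ.filter (fun x => C3 x ∨ C4 x ∨ C5 x ∨ C6 x ∨ C7 x ∨ C8 x ∨ C9 x), F x
      ≤ (∑ x ∈ Finset.univ.filter C3, F x) + (∑ x ∈ Finset.univ.filter C4, F x) + (∑ x ∈ Finset.univ.filter C5, F x) + (∑ x ∈ Finset.univ.filter C6, F x) + (∑ x ∈ Finset.univ.filter C7, F x) + (∑ x ∈ Finset.univ.filter C8, F x) + (∑ x ∈ Finset.univ.filter C9, F x) :=
    le_trans (sum_filter_or_le _ _ _ hFnn) (by linarith)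
  have t2 : ∑ x ∈ Finset.univ.filter (fun x => C2 x ∨ C3 x ∨ C4 x ∨ C5 x ∨ C6 x ∨ C7 x ∨ C8 x ∨ C9 x), F x
      ≤ (∑ x ∈ Finset.univ.filter C2, F x) + (∑ x ∈ Finset.univ.filter C3, F x) + (∑ x ∈ Finset.univ.filter C4, F x) + (∑ x ∈ Finset.univ.filter C5, F x) + (∑ x ∈ Finset.univ.filter C6, F x) + (∑ x ∈ Finset.univ.filter C7, F x) + (∑ x ∈ Finset.univ.filter C8, F x) + (∑ x ∈ Finset.univ.filter C9, F x) :=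
    le_trans (sum_filter_or_le _ _ _ hFnn) (by linarith)
  have t1 : ∑ x ∈ Finset.univ.filter (fun x => C1 x ∨ C2 x ∨ C3 x ∨ C4 x ∨ C5 x ∨ C6 x ∨ C7 x ∨ C8 x ∨ C9 x), F x
      ≤ (∑ x ∈ Finset.univ.filter C1, F x) + (∑ x ∈ Finset.univ.filter C2, F x) + (∑ x ∈ Finset.univ.filter C3, F x) + (∑ x ∈ Finset.univ.filter C4, F x) + (∑ x ∈ Finset.univ.filter C5, F x) + (∑ x ∈ Finset.univ.filter C6, F x) + (∑ x ∈ Finset.univ.filter C7, F x) + (∑ x ∈ Finset.univ.filter C8, F x) + (∑ x ∈ Finset.univ.filter C9, F x) :=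
    le_trans (sum_filter_or_le _ _ _ hFnn) (by linarith)
  calc ∑ x ∈ Finset.univ.filter
        (fun x : (Fin n × Fin n) × (Fin n × Fin n) × (Fin n × Fin n) × (Fin n × Fin n) =>
          DCond x.1 x.2.1 x.2.2.1 x.2.2.2), F x
      = ∑ x ∈ Finset.univ.filter
          (fun x => C1 x ∨ C2 x ∨ C3 x ∨ C4 x ∨ C5 x ∨ C6 x ∨ C7 x ∨ C8 x ∨ C9 x), F x :=
        Finset.sum_congr (Finset.filter_congr hsplit) (fun _ _ => rfl)
    _ ≤ 9 * (∑ p : Fin n × Fin n, (v p) ^ 2) ^ 2 := by linarith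
end

section
/- For any v ∈ ℝ^{[n]^k} and any nonempty S ⊆ [k] with |S| = t, Σ_{c ≺ d ∈ [n]^t} (Σ_{(a,b) ∼ (c,d)} ⟨Υ_{S,a}(v), Υ_{S,b}(v)⟩)² ≤ 2^t · (Σ_{p ∈ [n]^k} v_p²)², where the outer sum ranges over pairs c ≺ d in [n]^t and the inner sum over pairs (a, b) ∈ [n]^t × [n]^t similar to (c, d). -/
/-- The inverse projection `Φ_S^{-1}(c, d) ∈ [n]^k`. -/
def invProj {n k : ℕ} (S : Finset (Fin k)) (c : Fin S.card → Fin n)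
    (d : Fin Sᶜ.card → Fin n) : Fin k → Fin n :=
  fun j =>
    if hj : j ∈ S then c ((S.orderIsoOfFin rfl).symm ⟨j, hj⟩)
    else d ((Sᶜ.orderIsoOfFin rfl).symm ⟨j, by simpa [Finset.mem_compl] using hj⟩)

/-- The hyper-projection `Υ_{S,c}(v) ∈ ℝ^{[n]^{k−|S|}}`. -/
def hyperProj {n k : ℕ} (S : Finset (Fin k)) (c : Fin S.card → Fin n)
    (v : (Fin k → Fin n) → ℝ) : (Fin Sᶜ.card → Fin n) → ℝ :=
  fun d => v (invProj S c d)

lemma pair_cases {α : Type*} [DecidableEq α] {a b c d : α}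
    (h : ({a, b} : Finset α) = {c, d}) (hcd : c ≠ d) :
    (a = c ∧ b = d) ∨ (a = d ∧ b = c) := by
  have ha : a ∈ ({c, d} : Finset α) := h ▸ (by simp)
  have hb : b ∈ ({c, d} : Finset α) := h ▸ (by simp)
  have hc : c ∈ ({a, b} : Finset α) := h.symm ▸ (by simp)
  have hd : d ∈ ({a, b} : Finset α) := h.symm ▸ (by simp)
  simp only [Finset.mem_insert, Finset.mem_singleton] at ha hb hc hd
  rcases ha with ha | ha <;> rcases hb with hb | hb <;> tauto

lemma invProj_injective {n k : ℕ} (S : Finset (Fin k)) :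
    Function.Injective (fun cd : (Fin S.card → Fin n) × (Fin Sᶜ.card → Fin n) =>
      invProj S cd.1 cd.2) := by
  rintro ⟨c, d⟩ ⟨c', d'⟩ h
  simp only [Prod.mk.injEq]
  constructor
  · funext i
    have hjm : (S.orderIsoOfFin rfl i : Fin k) ∈ S := (S.orderIsoOfFin rfl i).2
    have h1 := congrFun h (S.orderIsoOfFin rfl i : Fin k)
    simp only [invProj] at h1
    rw [dif_pos hjm, dif_pos hjm] at h1
    rwa [show (⟨(S.orderIsoOfFin rfl i : Fin k), hjm⟩ : {x // x ∈ S})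
        = S.orderIsoOfFin rfl i from Subtype.ext rfl,
      OrderIso.symm_apply_apply] at h1
  · funext i
    have hjm : (Sᶜ.orderIsoOfFin rfl i : Fin k) ∉ S :=
      Finset.mem_compl.mp (Sᶜ.orderIsoOfFin rfl i).2
    have h1 := congrFun h (Sᶜ.orderIsoOfFin rfl i : Fin k)
    simp only [invProj] at h1
    rw [dif_neg hjm, dif_neg hjm] at h1
    rwa [show (⟨(Sᶜ.orderIsoOfFin rfl i : Fin k), by
          simpa [Finset.mem_compl] using hjm⟩ : {x // x ∈ Sᶜ})
        = Sᶜ.orderIsoOfFin rfl i from Subtype.ext rfl,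
      OrderIso.symm_apply_apply] at h1

lemma invProj_bijective {n k : ℕ} (S : Finset (Fin k)) :
    Function.Bijective (fun cd : (Fin S.card → Fin n) × (Fin Sᶜ.card → Fin n) =>
      invProj S cd.1 cd.2) := by
  rw [Fintype.bijective_iff_injective_and_card]
  refine ⟨invProj_injective S, ?_⟩
  simp [← pow_add, S.card_add_card_compl]

lemma sum_sq_hyperProj {n k : ℕ} (S : Finset (Fin k)) (v : (Fin k → Fin n) → ℝ) :
    ∑ a : Fin S.card → Fin n, ∑ e : Fin Sᶜ.card → Fin n, (hyperProj S a v e) ^ 2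
      = ∑ p : Fin k → Fin n, (v p) ^ 2 := by
  have := Fintype.sum_bijective _ (invProj_bijective S)
    (fun cd : (Fin S.card → Fin n) × (Fin Sᶜ.card → Fin n) => (hyperProj S cd.1 v cd.2) ^ 2)
    (fun p => (v p) ^ 2) (fun cd => rfl)
  rw [Fintype.sum_prod_type] at this
  simpa using this

/-- For any `v ∈ ℝ^{[n]^k}` and nonempty `S ⊆ [k]` with
`|S| = t`, `∑_{c ≺ d ∈ [n]^t} (∑_{(a,b) ∼ (c,d)} ⟨Υ_{S,a}(v), Υ_{S,b}(v)⟩)²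
≤ 2^t · (∑_p v_p²)²`. -/
theorem sum_sq_similar_le
    (n k : ℕ) (hn : 1 ≤ n) (hk : 1 ≤ k)
    (v : (Fin k → Fin n) → ℝ) (S : Finset (Fin k)) (hS : S.Nonempty) :
    ∑ cd ∈ Finset.univ.filter
        (fun cd : (Fin S.card → Fin n) × (Fin S.card → Fin n) =>
          ∀ i, cd.1 i < cd.2 i),
      (∑ ab ∈ Finset.univ.filter
          (fun ab : (Fin S.card → Fin n) × (Fin S.card → Fin n) =>
            ∀ i, ({ab.1 i, ab.2 i} : Finset (Fin n)) = {cd.1 i, cd.2 i}),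
        ∑ e : Fin Sᶜ.card → Fin n,
          hyperProj S ab.1 v e * hyperProj S ab.2 v e) ^ 2
      ≤ 2 ^ S.card * (∑ p : Fin k → Fin n, (v p) ^ 2) ^ 2 := by
  classical
  set t := S.card with ht
  set A : (Fin t → Fin n) × (Fin t → Fin n) → ℝ :=
    fun ab => ∑ e : Fin Sᶜ.card → Fin n, hyperProj S ab.1 v e * hyperProj S ab.2 v e with hA
  set F : Finset ((Fin t → Fin n) × (Fin t → Fin n)) :=
    Finset.univ.filter (fun cd => ∀ i, cd.1 i < cd.2 i) with hF
  set G : ((Fin t → Fin n) × (Fin t → Fin n)) → Finset ((Fin t → Fin n) × (Fin t → Fin n)) :=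
    fun cd => Finset.univ.filter
      (fun ab => ∀ i, ({ab.1 i, ab.2 i} : Finset (Fin n)) = {cd.1 i, cd.2 i}) with hG
  -- cardinality bound on each similarity class
  have hcard : ∀ cd ∈ F, (G cd).card ≤ 2 ^ t := by
    intro cd hcd
    have hlt : ∀ i, cd.1 i < cd.2 i := (Finset.mem_filter.mp hcd).2
    have key : ∀ ab ∈ G cd, ∀ i, ab.2 i = if ab.1 i = cd.1 i then cd.2 i else cd.1 i := by
      intro ab hab i
      have hsim : ({ab.1 i, ab.2 i} : Finset (Fin n)) = {cd.1 i, cd.2 i} :=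
        (Finset.mem_filter.mp hab).2 i
      rcases pair_cases hsim (hlt i).ne with ⟨h1, h2⟩ | ⟨h1, h2⟩
      · simp [h1, h2]
      · simp [h1, h2, (hlt i).ne']
    have hinj : Set.InjOn (fun ab : (Fin t → Fin n) × (Fin t → Fin n) => ab.1) (G cd) := by
      intro ab hab ab' hab' hfst
      have hf2 : ab.1 = ab'.1 := hfst
      have : ab.2 = ab'.2 := by
        funext i
        rw [key ab hab i, key ab' hab' i, hf2]
      exact Prod.ext hf2 this
    have hmaps : ∀ ab ∈ G cd,
        ab.1 ∈ Fintype.piFinset (fun i => ({cd.1 i, cd.2 i} : Finset (Fin n))) := by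
      intro ab hab
      rw [Fintype.mem_piFinset]
      intro i
      have hsim : ({ab.1 i, ab.2 i} : Finset (Fin n)) = {cd.1 i, cd.2 i} :=
        (Finset.mem_filter.mp hab).2 i
      rcases pair_cases hsim (hlt i).ne with ⟨h1, _⟩ | ⟨h1, _⟩ <;> simp [h1]
    calc (G cd).card ≤ (Fintype.piFinset (fun i => ({cd.1 i, cd.2 i} : Finset (Fin n)))).card :=
          Finset.card_le_card_of_injOn _ hmaps hinj
      _ = ∏ i : Fin t, ({cd.1 i, cd.2 i} : Finset (Fin n)).card := Fintype.card_piFinset _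
      _ ≤ ∏ _i : Fin t, 2 :=
          Finset.prod_le_prod (fun _ _ => Nat.zero_le _)
            (fun i _ => (Finset.card_insert_le _ _).trans (by simp))
      _ = 2 ^ t := by simp
  -- the similarity classes are pairwise disjoint over F
  have hdisj : (F : Set ((Fin t → Fin n) × (Fin t → Fin n))).PairwiseDisjoint G := by
    intro cd hcd cd' hcd' hne
    simp only [Function.onFun]
    rw [Finset.disjoint_left]
    intro ab hab hab'
    have h1 : ∀ i, ({ab.1 i, ab.2 i} : Finset (Fin n)) = {cd.1 i, cd.2 i} :=
      (Finset.mem_filter.mp hab).2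
    have h2 : ∀ i, ({ab.1 i, ab.2 i} : Finset (Fin n)) = {cd'.1 i, cd'.2 i} :=
      (Finset.mem_filter.mp hab').2
    have hlt : ∀ i, cd.1 i < cd.2 i := (Finset.mem_filter.mp (Finset.mem_coe.mp hcd)).2
    have hlt' : ∀ i, cd'.1 i < cd'.2 i := (Finset.mem_filter.mp (Finset.mem_coe.mp hcd')).2
    apply hne
    have : ∀ i, cd.1 i = cd'.1 i ∧ cd.2 i = cd'.2 i := by
      intro i
      have heq : ({cd.1 i, cd.2 i} : Finset (Fin n)) = {cd'.1 i, cd'.2 i} :=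
        (h1 i).symm.trans (h2 i)
      rcases pair_cases heq (hlt' i).ne with ⟨e1, e2⟩ | ⟨e1, e2⟩
      · exact ⟨e1, e2⟩
      · exfalso
        exact absurd ((hlt i).trans_eq e2) (not_lt.mpr (((hlt' i).trans_eq e1.symm)).le)
    exact Prod.ext (funext fun i => (this i).1) (funext fun i => (this i).2)
  have hAsq_nonneg : ∀ ab, (0 : ℝ) ≤ (A ab) ^ 2 := fun ab => sq_nonneg _
  -- total bound over all pairs
  have htotal : ∑ ab : (Fin t → Fin n) × (Fin t → Fin n), (A ab) ^ 2
      ≤ (∑ p : Fin k → Fin n, (v p) ^ 2) ^ 2 := by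
    set W : (Fin t → Fin n) → ℝ := fun a => ∑ e : Fin Sᶜ.card → Fin n, (hyperProj S a v e) ^ 2
      with hW
    calc ∑ ab : (Fin t → Fin n) × (Fin t → Fin n), (A ab) ^ 2
        ≤ ∑ ab : (Fin t → Fin n) × (Fin t → Fin n), W ab.1 * W ab.2 :=
          Finset.sum_le_sum (fun ab _ => Finset.sum_mul_sq_le_sq_mul_sq Finset.univ _ _)
      _ = (∑ a, W a) * (∑ b, W b) := by
          rw [Finset.sum_mul_sum, Fintype.sum_prod_type]
      _ = (∑ a, W a) ^ 2 := (sq _).symm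
      _ = (∑ p : Fin k → Fin n, (v p) ^ 2) ^ 2 := by rw [hW, sum_sq_hyperProj S v]
  calc ∑ cd ∈ F, (∑ ab ∈ G cd, A ab) ^ 2
      ≤ ∑ cd ∈ F, ((G cd).card : ℝ) * ∑ ab ∈ G cd, (A ab) ^ 2 :=
        Finset.sum_le_sum (fun cd _ => sq_sum_le_card_mul_sum_sq)
    _ ≤ ∑ cd ∈ F, (2 ^ t : ℝ) * ∑ ab ∈ G cd, (A ab) ^ 2 := by
        refine Finset.sum_le_sum (fun cd hcd => ?_)
        refine mul_le_mul_of_nonneg_right ?_ (Finset.sum_nonneg fun ab _ => sq_nonneg _)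
        exact_mod_cast Nat.cast_le.mpr (hcard cd hcd)
    _ = (2 ^ t : ℝ) * ∑ cd ∈ F, ∑ ab ∈ G cd, (A ab) ^ 2 := by rw [Finset.mul_sum]
    _ = (2 ^ t : ℝ) * ∑ ab ∈ F.biUnion G, (A ab) ^ 2 := by rw [Finset.sum_biUnion hdisj]
    _ ≤ (2 ^ t : ℝ) * ∑ ab : (Fin t → Fin n) × (Fin t → Fin n), (A ab) ^ 2 := by
        refine mul_le_mul_of_nonneg_left ?_ (by positivity)
        exact Finset.sum_le_sum_of_subset_of_nonneg (Finset.subset_univ _)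
          (fun ab _ _ => sq_nonneg _)
    _ ≤ (2 ^ t : ℝ) * (∑ p : Fin k → Fin n, (v p) ^ 2) ^ 2 :=
        mul_le_mul_of_nonneg_left htotal (by positivity)
end
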